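/- arXiv:math/0110072 — 3 statements merged into one kernel-verified Lean document; each statement's English description precedes it below -/
import Mathlib

section
/- Let k be a field, A₁ and A₂ associative k-algebras, H₁ a group acting on A₁ by k-algebra automorphisms and H₂ a group acting on A₂ by k-algebra automorphisms. Suppose that A₁ has no nonzero proper H₁-invariant two-sided ideals, A₂ has no nonzero proper H₂-invariant two-sided ideals, and the H₁-fixed subring of the center of A₁ equals k. Then the tensor product A₁ ⊗_k A₂, with the natural H₁ × H₂ action, has no nonzero proper (H₁ × H₂)-invariant two-sided ideals. -/
open TensorProduct

/-!
Fix a basis `(bᵢ)` of `A₂`, so that every element of `A₁ ⊗ A₂` is uniquely `∑ aᵢ ⊗ bᵢ`, and let `x`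
be a nonzero element of the invariant ideal `I` with the fewest nonzero coefficients. For `j` in its
support, the `j`-th coefficients of the elements of `I` supported inside `supp x` form an
`H₁`-invariant ideal of `A₁` containing `xⱼ ≠ 0`, hence containing `1`: some `x' ∈ I` with
`supp x' ⊆ supp x` has `x'ⱼ = 1`. For `a ∈ A₁` and `h ∈ H₁`, both `(a ⊗ 1) x' - x' (a ⊗ 1)` and
`h • x' - x'` lie in `I` and have support in `supp x \ {j}`, so they vanish by minimality. Thus the
coefficients of `x'` are central and `H₁`-fixed, i.e. scalars, and `x' = 1 ⊗ m` with `m ≠ 0`.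
Finally `{m | 1 ⊗ m ∈ I}` is a nonzero `H₂`-invariant ideal of `A₂`, so it contains `1`.
-/

namespace TensorProduct

variable {R M M' N κ : Type*} [CommSemiring R] [AddCommMonoid M] [Module R M]
  [AddCommMonoid M'] [Module R M'] [AddCommMonoid N] [Module R N] [DecidableEq κ]
  (𝒞 : Module.Basis κ R N)

lemma equivFinsuppOfBasisRight_rTensor_apply (f : M →ₗ[R] M') (x : M ⊗[R] N) (i : κ) :
    equivFinsuppOfBasisRight 𝒞 (f.rTensor N x) i = f (equivFinsuppOfBasisRight 𝒞 x i) := by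
  induction x using TensorProduct.induction_on with
  | zero => simp
  | tmul m n => simp
  | add x y hx hy => simp [hx, hy]

lemma support_equivFinsuppOfBasisRight_rTensor_subset (f : M →ₗ[R] M') (x : M ⊗[R] N) :
    (equivFinsuppOfBasisRight 𝒞 (f.rTensor N x)).support ⊆
      (equivFinsuppOfBasisRight 𝒞 x).support := by
  intro i
  simp only [Finsupp.mem_support_iff, equivFinsuppOfBasisRight_rTensor_apply]
  exact mt fun h => h ▸ map_zero f

lemma exists_eq_one_tmul_of_equivFinsuppOfBasisRight {A : Type*} [Semiring A] [Algebra R A]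
    (x : A ⊗[R] N) (hx : ∀ i, ∃ c : R, equivFinsuppOfBasisRight 𝒞 x i = algebraMap R A c) :
    ∃ n : N, x = 1 ⊗ₜ n := by
  choose c hc using hx
  refine ⟨∑ i ∈ (equivFinsuppOfBasisRight 𝒞 x).support, c i • 𝒞 i, ?_⟩
  calc x = (equivFinsuppOfBasisRight 𝒞).symm (equivFinsuppOfBasisRight 𝒞 x) := by simp
    _ = ∑ i ∈ (equivFinsuppOfBasisRight 𝒞 x).support, algebraMap R A (c i) ⊗ₜ 𝒞 i := by
      simp only [equivFinsuppOfBasisRight_symm_apply, Finsupp.sum, hc]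
    _ = _ := by simp [tmul_sum, Algebra.algebraMap_eq_smul_one, smul_tmul]

end TensorProduct

namespace Algebra.TensorProduct

variable {R A B : Type*} [CommSemiring R] [Semiring A] [Algebra R A] [Semiring B] [Algebra R B]

lemma rTensor_mulLeft_apply (a : A) (x : A ⊗[R] B) :
    (LinearMap.mulLeft R a).rTensor B x = (a ⊗ₜ 1) * x := by
  induction x using TensorProduct.induction_on with
  | zero => simp
  | tmul a' b => simp
  | add x y hx hy => simp [hx, hy, mul_add]

lemma rTensor_mulRight_apply (a : A) (x : A ⊗[R] B) :
    (LinearMap.mulRight R a).rTensor B x = x * (a ⊗ₜ 1) := by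
  induction x using TensorProduct.induction_on with
  | zero => simp
  | tmul a' b => simp
  | add x y hx hy => simp [hx, hy, add_mul]

lemma congr_refl_apply (e : A ≃ₐ[R] A) (x : A ⊗[R] B) :
    congr e AlgEquiv.refl x = e.toLinearMap.rTensor B x := by
  induction x using TensorProduct.induction_on with
  | zero => simp
  | tmul a b => simp
  | add x y hx hy => rw [map_add, map_add, hx, hy]

end Algebra.TensorProduct

namespace TwoSidedIdeal

variable {k A B ι : Type*} [CommRing k] [Ring A] [Algebra k A] [Ring B] [Algebra k B]
  [DecidableEq ι] {𝒞 : Module.Basis ι k B} {I : TwoSidedIdeal (A ⊗[k] B)}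

local notation "coeff" => equivFinsuppOfBasisRight 𝒞

variable (𝒞 I) in
def coordSet (s : Finset ι) (j : ι) : Set A :=
  {a | ∃ y ∈ I, (coeff y).support ⊆ s ∧ coeff y j = a}

lemma map_mem_coordSet {s : Finset ι} {j : ι} {f : A →ₗ[k] A}
    (hf : ∀ y ∈ I, f.rTensor B y ∈ I) {a : A} (ha : a ∈ coordSet 𝒞 I s j) :
    f a ∈ coordSet 𝒞 I s j := by
  obtain ⟨y, hyI, hys, rfl⟩ := ha
  exact ⟨f.rTensor B y, hf y hyI,
    (support_equivFinsuppOfBasisRight_rTensor_subset 𝒞 f y).trans hys,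
    equivFinsuppOfBasisRight_rTensor_apply 𝒞 f y j⟩

variable (𝒞 I) in
def coordIdeal (s : Finset ι) (j : ι) : TwoSidedIdeal A :=
  .mk' (coordSet 𝒞 I s j) ⟨0, I.zero_mem, by simp, by simp⟩
    (by
      rintro _ _ ⟨y, hyI, hys, rfl⟩ ⟨z, hzI, hzs, rfl⟩
      exact ⟨y + z, I.add_mem hyI hzI,
        by simpa using Finsupp.support_add.trans (Finset.union_subset hys hzs), by simp⟩)
    (map_mem_coordSet (f := -LinearMap.id) fun y hy => by
      simpa [LinearMap.rTensor_neg] using I.neg_mem hy)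
    (fun {u _} => map_mem_coordSet (f := LinearMap.mulLeft k u) fun y hy => by
      simpa [Algebra.TensorProduct.rTensor_mulLeft_apply] using I.mul_mem_left _ _ hy)
    (fun {_ u} => map_mem_coordSet (f := LinearMap.mulRight k u) fun y hy => by
      simpa [Algebra.TensorProduct.rTensor_mulRight_apply] using I.mul_mem_right _ _ hy)

variable (𝒞 I) in
lemma mem_coordIdeal {s : Finset ι} {j : ι} {a : A} :
    a ∈ coordIdeal 𝒞 I s j ↔ ∃ y ∈ I, (coeff y).support ⊆ s ∧ coeff y j = a :=
  mem_mk' ..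

variable (𝒞) in
lemma exists_ne_zero_forall_card_support_lt (hI : I ≠ ⊥) :
    ∃ x ∈ I, x ≠ 0 ∧
      ∀ z ∈ I, (coeff z).support.card < (coeff x).support.card → z = 0 := by
  have hne : {y | y ∈ I ∧ y ≠ 0}.Nonempty := by
    by_contra! h
    exact hI (eq_bot_iff.2 fun y hy => by_contra fun hy0 => h.subset ⟨hy, hy0⟩)
  obtain ⟨x, ⟨hxI, hx0⟩, hmin⟩ := (measure fun y => (coeff y).support.card).wf.has_min _ hne
  exact ⟨x, hxI, hx0, fun z hz hlt => by_contra fun hz0 => hmin z ⟨hz, hz0⟩ hlt⟩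

lemma exists_coeff_eq_one_of_support_subset {H : Type*} {φ : H → A ≃ₐ[k] A}
    (hsimple : ∀ J : TwoSidedIdeal A, (∀ h, ∀ a ∈ J, φ h a ∈ J) → J = ⊥ ∨ J = ⊤)
    (hI : ∀ h, ∀ y ∈ I, (φ h).toLinearMap.rTensor B y ∈ I) {x : A ⊗[k] B} (hxI : x ∈ I)
    {j : ι} (hj : j ∈ (coeff x).support) :
    ∃ x' ∈ I, (coeff x').support ⊆ (coeff x).support ∧ coeff x' j = 1 := by
  have hJ : coordIdeal 𝒞 I (coeff x).support j = ⊤ := by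
    refine (hsimple _ fun h a ha => ?_).resolve_left fun hbot => ?_
    · exact (mem_coordIdeal ..).2 (map_mem_coordSet (hI h) ((mem_coordIdeal ..).1 ha))
    · have hxj := (mem_coordIdeal (a := coeff x j) 𝒞 I).2 ⟨x, hxI, subset_rfl, rfl⟩
      rw [hbot, mem_bot] at hxj
      exact Finsupp.mem_support_iff.1 hj hxj
  exact (mem_coordIdeal (a := (1 : A)) 𝒞 I).1 (by rw [hJ]; exact mem_top _)

lemma map_coeff_eq_zero_of_minimal {x x' : A ⊗[k] B} {j : ι}
    (hmin : ∀ z ∈ I, (coeff z).support.card < (coeff x).support.card → z = 0)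
    (hj : j ∈ (coeff x).support) (hx' : (coeff x').support ⊆ (coeff x).support)
    (hx'j : coeff x' j = 1) {D : A →ₗ[k] A} (hD : D 1 = 0) (hDx' : D.rTensor B x' ∈ I)
    (i : ι) : D (coeff x' i) = 0 := by
  have hsupp : (coeff (D.rTensor B x')).support ⊆ (coeff x).support.erase j := by
    intro i hi
    refine Finset.mem_erase.2
      ⟨?_, hx' (support_equivFinsuppOfBasisRight_rTensor_subset 𝒞 D x' hi)⟩
    rintro rfl
    simp [equivFinsuppOfBasisRight_rTensor_apply, hx'j, hD] at hi
  have hDx'0 :=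
    hmin _ hDx' ((Finset.card_le_card hsupp).trans_lt (Finset.card_erase_lt_of_mem hj))
  simpa [equivFinsuppOfBasisRight_rTensor_apply] using congr(coeff $hDx'0 i)

lemma coeff_mem_center_of_minimal {x x' : A ⊗[k] B} {j : ι}
    (hmin : ∀ z ∈ I, (coeff z).support.card < (coeff x).support.card → z = 0)
    (hj : j ∈ (coeff x).support) (hx'I : x' ∈ I) (hx' : (coeff x').support ⊆ (coeff x).support)
    (hx'j : coeff x' j = 1) (i : ι) : coeff x' i ∈ Subalgebra.center k A := by
  refine Subalgebra.mem_center_iff.2 fun a => sub_eq_zero.1 <| map_coeff_eq_zero_of_minimal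
    hmin hj hx' hx'j (D := LinearMap.mulLeft k a - LinearMap.mulRight k a) (by simp) ?_ i
  rw [LinearMap.rTensor_sub, LinearMap.sub_apply, Algebra.TensorProduct.rTensor_mulLeft_apply,
    Algebra.TensorProduct.rTensor_mulRight_apply]
  exact I.sub_mem (I.mul_mem_left _ _ hx'I) (I.mul_mem_right _ _ hx'I)

lemma map_coeff_eq_self_of_minimal {x x' : A ⊗[k] B} {j : ι}
    (hmin : ∀ z ∈ I, (coeff z).support.card < (coeff x).support.card → z = 0)
    (hj : j ∈ (coeff x).support) (hx'I : x' ∈ I) (hx' : (coeff x').support ⊆ (coeff x).support)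
    (hx'j : coeff x' j = 1) {σ : A ≃ₐ[k] A} (hσ : σ.toLinearMap.rTensor B x' ∈ I) (i : ι) :
    σ (coeff x' i) = coeff x' i := by
  refine sub_eq_zero.1 <| map_coeff_eq_zero_of_minimal
    hmin hj hx' hx'j (D := σ.toLinearMap - LinearMap.id) (by simp) ?_ i
  rw [LinearMap.rTensor_sub, LinearMap.sub_apply, LinearMap.rTensor_id_apply]
  exact I.sub_mem hσ hx'I

end TwoSidedIdeal

theorem TwoSidedIdeal.exists_one_tmul_mem_of_ne_bot {k A B H : Type*} [Field k] [Ring A]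
    [Algebra k A] [Ring B] [Algebra k B] (φ : H → A ≃ₐ[k] A)
    (hsimple : ∀ J : TwoSidedIdeal A, (∀ h, ∀ a ∈ J, φ h a ∈ J) → J = ⊥ ∨ J = ⊤)
    (hcenter : ∀ z ∈ Subalgebra.center k A, (∀ h, φ h z = z) → ∃ c : k, z = algebraMap k A c)
    {I : TwoSidedIdeal (A ⊗[k] B)} (hI : ∀ h, ∀ y ∈ I, (φ h).toLinearMap.rTensor B y ∈ I)
    (hI0 : I ≠ ⊥) : ∃ m : B, m ≠ 0 ∧ 1 ⊗ₜ m ∈ I := by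
  classical
  let 𝒞 := Module.Basis.ofVectorSpace k B
  obtain ⟨x, hxI, hx0, hmin⟩ := exists_ne_zero_forall_card_support_lt 𝒞 hI0
  obtain ⟨j, hj⟩ : (equivFinsuppOfBasisRight 𝒞 x).support.Nonempty := by simpa using hx0
  obtain ⟨x', hx'I, hx'sub, hx'j⟩ := exists_coeff_eq_one_of_support_subset hsimple hI hxI hj
  obtain ⟨m, rfl⟩ := exists_eq_one_tmul_of_equivFinsuppOfBasisRight 𝒞 _ fun i =>
    hcenter _ (coeff_mem_center_of_minimal hmin hj hx'I hx'sub hx'j i)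
      fun h => map_coeff_eq_self_of_minimal hmin hj hx'I hx'sub hx'j (hI h _ hx'I) i
  refine ⟨m, ?_, hx'I⟩
  rintro rfl
  have : Subsingleton A := subsingleton_of_zero_eq_one (by simpa using hx'j)
  exact Finsupp.mem_support_iff.1 hj (Subsingleton.elim _ _)

/-- If `A₁` is `H₁`-simple, `A₂` is `H₂`-simple, and the `H₁`-fixed subring of
the center of `A₁` equals `k`, then `A₁ ⊗[k] A₂` is `(H₁ × H₂)`-simple. -/
theorem tensor_product_G_simple
    {k : Type*} [Field k] {A₁ A₂ : Type*} [Ring A₁] [Ring A₂] [Algebra k A₁] [Algebra k A₂]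
    {H₁ H₂ : Type*} [Group H₁] [Group H₂]
    (φ₁ : H₁ →* (A₁ ≃ₐ[k] A₁)) (φ₂ : H₂ →* (A₂ ≃ₐ[k] A₂))
    (hA₁simple : ∀ I : TwoSidedIdeal A₁, (∀ h : H₁, ∀ x ∈ I, φ₁ h x ∈ I) → I = ⊥ ∨ I = ⊤)
    (hA₂simple : ∀ I : TwoSidedIdeal A₂, (∀ h : H₂, ∀ x ∈ I, φ₂ h x ∈ I) → I = ⊥ ∨ I = ⊤)
    (hcenter : ∀ z ∈ Subalgebra.center k A₁, (∀ h : H₁, φ₁ h z = z) →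
      ∃ c : k, z = algebraMap k A₁ c) :
    ∀ I : TwoSidedIdeal (A₁ ⊗[k] A₂),
      (∀ h : H₁ × H₂, ∀ x ∈ I, (Algebra.TensorProduct.congr (φ₁ h.1) (φ₂ h.2)) x ∈ I) →
      I = ⊥ ∨ I = ⊤ := by
  intro I hI
  refine or_iff_not_imp_left.2 fun hI0 => ?_
  obtain ⟨m, hm0, hmI⟩ := TwoSidedIdeal.exists_one_tmul_mem_of_ne_bot φ₁ hA₁simple hcenter
    (fun h y hy => by
      have := hI (h, 1) y hy
      rwa [map_one, AlgEquiv.aut_one, Algebra.TensorProduct.congr_refl_apply] at this) hI0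
  let ι₂ : A₂ →ₐ[k] A₁ ⊗[k] A₂ := Algebra.TensorProduct.includeRight
  have hJ : I.comap ι₂ = ⊤ := by
    refine (hA₂simple _ fun h y hy => ?_).resolve_left fun hbot => hm0 ?_
    · simpa [ι₂, TwoSidedIdeal.mem_comap] using hI (1, h) _ ((TwoSidedIdeal.mem_comap ι₂).1 hy)
    · simpa [hbot] using (TwoSidedIdeal.mem_comap ι₂ (I := I)).2 hmI
  have h1 : (1 : A₂) ∈ I.comap ι₂ := hJ ▸ TwoSidedIdeal.mem_top _
  rw [← I.one_mem_iff, ← map_one ι₂]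
  exact (TwoSidedIdeal.mem_comap ι₂).1 h1
end

section
/- Let H₁ and H₂ be groups acting by k-algebra automorphisms on k-algebras A₁ and A₂ respectively, and let P be an (H₁ × H₂)-prime ideal of A₁ ⊗_k A₂. If P₁ and P₂ denote the preimages of P under the canonical maps A₁ → A₁ ⊗_k A₂ (a ↦ a ⊗ 1) and A₂ → A₁ ⊗_k A₂ (a ↦ 1 ⊗ a), and if A₁ is noetherian (so that P₁ contains a finite product of H₁-primes containing it), then P₁ is an H₁-prime ideal of A₁ and P₂ is an H₂-prime ideal of A₂. -/
/-!
The inclusion `A₁ → A₁ ⊗ A₂` is a centralizing extension: `A₁ ⊗ A₂` is additively spanned by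
products `(a ⊗ 1)(1 ⊗ b)` whose second factor commutes with `A₁ ⊗ 1`; likewise for `A₂`. Along a
centralizing extension `f : R → S` one has `f x · s · f y = ∑ f (x rᵢ y) cᵢ`, so the ideals
generated by `f(I)` and `f(J)` multiply into `P` as soon as `I J` lies in the contraction of `P`.
Equivariance of `f` makes these extended ideals invariant, and primeness of `P` then descends.
-/

open TensorProduct

/-- A two-sided ideal `Q` of `R` is `G`-prime (with respect to an action `φ` of `G` on `R` by
ring automorphisms) if it is proper, `G`-invariant, and whenever `I, J` are `G`-invariant
two-sided ideals with `I * J ⊆ Q` then `I ⊆ Q` or `J ⊆ Q`. -/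
def IsGPrimeIdeal {R : Type*} [Ring R] {G : Type*} [Group G]
    (φ : G →* (R ≃+* R)) (Q : TwoSidedIdeal R) : Prop :=
  Q ≠ ⊤ ∧ (∀ g : G, ∀ x ∈ Q, φ g x ∈ Q) ∧
    ∀ I J : TwoSidedIdeal R, (∀ g : G, ∀ x ∈ I, φ g x ∈ I) → (∀ g : G, ∀ x ∈ J, φ g x ∈ J) →
      (∀ x ∈ I, ∀ y ∈ J, x * y ∈ Q) → I ≤ Q ∨ J ≤ Q

def IsCentralizingExtension {R S F : Type*} [Semiring S] [FunLike F R S] (f : F) : Prop :=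
  AddSubmonoid.closure (Set.image2 (· * ·) (Set.range f) (Set.centralizer (Set.range f))) = ⊤

namespace TwoSidedIdeal

variable {R S F : Type*} [Ring R] [Ring S] [FunLike F R S]

theorem mul_mem_of_mem_span {s t : Set R} {P : TwoSidedIdeal R}
    (h : ∀ a ∈ s, ∀ r, ∀ b ∈ t, a * r * b ∈ P) {u v : R} (hu : u ∈ span s) (hv : v ∈ span t) :
    u * v ∈ P := by
  induction hu using span_induction generalizing v with
  | mem a ha =>
    suffices ∀ r, a * r * v ∈ P by simpa using this 1
    induction hv using span_induction with
    | mem b hb => exact fun r => h a ha r b hb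
    | zero => simp [P.zero_mem]
    | add x y _ _ hx hy => exact fun r => by rw [mul_add]; exact P.add_mem (hx r) (hy r)
    | neg x _ hx => exact fun r => by rw [mul_neg]; exact P.neg_mem (hx r)
    | left_absorb c x _ hx => exact fun r => by rw [← mul_assoc, mul_assoc a]; exact hx _
    | right_absorb c x _ hx => exact fun r => by rw [← mul_assoc]; exact P.mul_mem_right _ _ (hx r)
  | zero => simp [P.zero_mem]
  | add x y _ _ hx hy => rw [add_mul]; exact P.add_mem (hx hv) (hy hv)
  | neg x _ hx => rw [neg_mul]; exact P.neg_mem (hx hv)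
  | left_absorb c x _ hx => rw [mul_assoc]; exact P.mul_mem_left _ _ (hx hv)
  | right_absorb c x _ hx => rw [mul_assoc]; exact hx (mul_mem_left _ _ _ hv)

theorem map_le_comap_map {f : F} {e : S ≃+* S} {e' : R ≃+* R}
    (hfe : ∀ x, e (f x) = f (e' x)) {I : TwoSidedIdeal R} (hI : ∀ x ∈ I, e' x ∈ I) :
    I.map f ≤ (I.map f).comap e :=
  span_le.2 fun _ ⟨x, hx, hxy⟩ => by
    rw [← hxy, SetLike.mem_coe, mem_comap, hfe]
    exact subset_span ⟨e' x, hI x hx, rfl⟩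

variable [RingHomClass F R S]

theorem comap_ne_top (f : F) {P : TwoSidedIdeal S} (hP : P ≠ ⊤) : P.comap f ≠ ⊤ := by
  rwa [Ne, ← one_mem_iff, mem_comap, map_one, one_mem_iff]

end TwoSidedIdeal

theorem IsCentralizingExtension.mul_mul_mem {R S F : Type*} [Ring R] [Ring S] [FunLike F R S]
    [RingHomClass F R S] {f : F} (hf : IsCentralizingExtension f) {P : TwoSidedIdeal S}
    {x y : R} (hxy : ∀ r, f (x * r * y) ∈ P) (s : S) : f x * s * f y ∈ P := by
  have hs : s ∈ AddSubmonoid.closure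
      (Set.image2 (· * ·) (Set.range f) (Set.centralizer (Set.range f))) := hf ▸ trivial
  induction hs using AddSubmonoid.closure_induction with
  | mem _ hs =>
    obtain ⟨_, ⟨r, rfl⟩, c, hc, rfl⟩ := hs
    have hcomm : f x * (f r * c) * f y = f (x * r * y) * c := by
      simp only [map_mul, mul_assoc, hc (f y) ⟨y, rfl⟩]
    rw [hcomm]
    exact P.mul_mem_right _ _ (hxy r)
  | zero => simp [P.zero_mem]
  | add _ _ _ _ h₁ h₂ => rw [mul_add, add_mul]; exact P.add_mem h₁ h₂

theorem IsGPrimeIdeal.comap {R S F G H : Type*} [Ring R] [Ring S] [FunLike F R S]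
    [RingHomClass F R S] [Group G] [Group H] {φ : G →* (S ≃+* S)} {ψ : H →* (R ≃+* R)}
    {P : TwoSidedIdeal S} (hP : IsGPrimeIdeal φ P) {f : F} (hf : IsCentralizingExtension f)
    {σ : G → H} (hσ : Function.Surjective σ) (hfσ : ∀ g x, φ g (f x) = f (ψ (σ g) x)) :
    IsGPrimeIdeal ψ (P.comap f) := by
  obtain ⟨hP_ne_top, hP_inv, hP_prime⟩ := hP
  refine ⟨TwoSidedIdeal.comap_ne_top f hP_ne_top, fun h x hx => ?_, fun I J hI hJ hIJ => ?_⟩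
  · obtain ⟨g, rfl⟩ := hσ h
    rw [TwoSidedIdeal.mem_comap, ← hfσ]
    exact hP_inv g _ ((TwoSidedIdeal.mem_comap f).1 hx)
  · have hmap_inv : ∀ K : TwoSidedIdeal R, (∀ h, ∀ x ∈ K, ψ h x ∈ K) →
        ∀ g, ∀ z ∈ K.map f, φ g z ∈ K.map f := fun K hK g z hz =>
      (TwoSidedIdeal.mem_comap _).1 (TwoSidedIdeal.map_le_comap_map (hfσ g) (hK (σ g)) hz)
    have hmap_mul : ∀ u ∈ I.map f, ∀ v ∈ J.map f, u * v ∈ P := by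
      refine fun u hu v hv => TwoSidedIdeal.mul_mem_of_mem_span ?_ hu hv
      rintro _ ⟨x, hx, rfl⟩ s _ ⟨y, hy, rfl⟩
      exact hf.mul_mul_mem
        (fun r => (TwoSidedIdeal.mem_comap f).1 (hIJ _ (I.mul_mem_right _ r hx) y hy)) s
    refine (hP_prime _ _ (hmap_inv I hI) (hmap_inv J hJ) hmap_mul).imp ?_ ?_ <;>
      exact fun hle x hx =>
        (TwoSidedIdeal.mem_comap f).2 (hle (TwoSidedIdeal.subset_span ⟨x, hx, rfl⟩))

namespace Algebra.TensorProduct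

variable {R A B : Type*} [CommSemiring R] [Semiring A] [Semiring B] [Algebra R A] [Algebra R B]

theorem isCentralizingExtension_includeLeft {S : Type*} [CommSemiring S] [Algebra S A]
    [SMulCommClass R S A] : IsCentralizingExtension (includeLeft : A →ₐ[S] A ⊗[R] B) := by
  refine (AddSubmonoid.eq_top_iff' _).2 fun z => ?_
  induction z using TensorProduct.induction_on with
  | zero => exact zero_mem _
  | tmul a b =>
    refine AddSubmonoid.subset_closure ⟨a ⊗ₜ 1, ⟨a, rfl⟩, 1 ⊗ₜ b, ?_, by simp⟩
    rintro _ ⟨a', rfl⟩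
    simp
  | add _ _ h₁ h₂ => exact add_mem h₁ h₂

theorem isCentralizingExtension_includeRight :
    IsCentralizingExtension (includeRight : B →ₐ[R] A ⊗[R] B) := by
  refine (AddSubmonoid.eq_top_iff' _).2 fun z => ?_
  induction z using TensorProduct.induction_on with
  | zero => exact zero_mem _
  | tmul a b =>
    refine AddSubmonoid.subset_closure ⟨1 ⊗ₜ b, ⟨b, rfl⟩, a ⊗ₜ 1, ?_, by simp⟩
    rintro _ ⟨b', rfl⟩
    simp
  | add _ _ h₁ h₂ => exact add_mem h₁ h₂

end Algebra.TensorProduct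

theorem contraction_of_tensor_G_prime_general
    {k : Type*} [Field k] {A₁ A₂ : Type*} [Ring A₁] [Ring A₂] [Algebra k A₁] [Algebra k A₂]
    {H₁ H₂ : Type*} [Group H₁] [Group H₂]
    (φ₁ : H₁ →* (A₁ ≃ₐ[k] A₁)) (φ₂ : H₂ →* (A₂ ≃ₐ[k] A₂))
    (φ : H₁ × H₂ →* ((A₁ ⊗[k] A₂) ≃+* (A₁ ⊗[k] A₂)))
    (hφ : ∀ h : H₁ × H₂, φ h = (Algebra.TensorProduct.congr (φ₁ h.1) (φ₂ h.2)).toRingEquiv)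
    (P : TwoSidedIdeal (A₁ ⊗[k] A₂))
    (hP : IsGPrimeIdeal φ P)
    (P₁ : TwoSidedIdeal A₁) (P₂ : TwoSidedIdeal A₂)
    (hP₁ : P₁ = P.comap (Algebra.TensorProduct.includeLeft (R := k) (S := k)
      (A := A₁) (B := A₂) : A₁ →ₐ[k] A₁ ⊗[k] A₂))
    (hP₂ : P₂ = P.comap (Algebra.TensorProduct.includeRight (R := k)
      (A := A₁) (B := A₂) : A₂ →ₐ[k] A₁ ⊗[k] A₂)) :
    IsGPrimeIdeal (MonoidHom.comp (⟨⟨fun e => e.toRingEquiv, rfl⟩,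
        fun _ _ => rfl⟩ : (A₁ ≃ₐ[k] A₁) →* (A₁ ≃+* A₁)) φ₁) P₁ ∧
    IsGPrimeIdeal (MonoidHom.comp (⟨⟨fun e => e.toRingEquiv, rfl⟩,
        fun _ _ => rfl⟩ : (A₂ ≃ₐ[k] A₂) →* (A₂ ≃+* A₂)) φ₂) P₂ := by
  subst hP₁ hP₂
  constructor
  · refine hP.comap Algebra.TensorProduct.isCentralizingExtension_includeLeft
      Prod.fst_surjective fun g x => ?_
    simp [hφ]
    rfl
  · refine hP.comap Algebra.TensorProduct.isCentralizingExtension_includeRight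
      Prod.snd_surjective fun g x => ?_
    simp [hφ]
    rfl

/-- If `P` is an `(H₁ × H₂)`-prime ideal of `A₁ ⊗[k] A₂`, and the contraction
`P₁` of `P` to `A₁` contains a finite product of `H₁`-primes containing it (a consequence of
`A₁` being noetherian), then the contractions `P₁` and `P₂` are `H₁`-prime and `H₂`-prime
respectively. -/
theorem contraction_of_tensor_G_prime
    {k : Type*} [Field k] {A₁ A₂ : Type*} [Ring A₁] [Ring A₂] [Algebra k A₁] [Algebra k A₂]
    {H₁ H₂ : Type*} [Group H₁] [Group H₂]
    (φ₁ : H₁ →* (A₁ ≃ₐ[k] A₁)) (φ₂ : H₂ →* (A₂ ≃ₐ[k] A₂))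
    (φ : H₁ × H₂ →* ((A₁ ⊗[k] A₂) ≃+* (A₁ ⊗[k] A₂)))
    (hφ : ∀ h : H₁ × H₂, φ h = (Algebra.TensorProduct.congr (φ₁ h.1) (φ₂ h.2)).toRingEquiv)
    (P : TwoSidedIdeal (A₁ ⊗[k] A₂))
    (hP : IsGPrimeIdeal φ P)
    (P₁ : TwoSidedIdeal A₁) (P₂ : TwoSidedIdeal A₂)
    (hP₁ : P₁ = P.comap (Algebra.TensorProduct.includeLeft (R := k) (S := k)
      (A := A₁) (B := A₂) : A₁ →ₐ[k] A₁ ⊗[k] A₂))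
    (hP₂ : P₂ = P.comap (Algebra.TensorProduct.includeRight (R := k)
      (A := A₁) (B := A₂) : A₂ →ₐ[k] A₁ ⊗[k] A₂))
    -- consequence of `A₁` being noetherian: every `H₁`-ideal contains a finite product of
    -- `H₁`-primes containing it
    (hnoeth : ∃ (t : ℕ) (Q : Fin (t + 1) → TwoSidedIdeal A₁),
      (∀ i, IsGPrimeIdeal (MonoidHom.comp (⟨⟨fun e => e.toRingEquiv, rfl⟩,
          fun _ _ => rfl⟩ : (A₁ ≃ₐ[k] A₁) →* (A₁ ≃+* A₁)) φ₁) (Q i)) ∧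
      (∀ i, P₁ ≤ Q i) ∧
      (∀ x : Fin (t + 1) → A₁, (∀ i, x i ∈ Q i) → (List.ofFn x).prod ∈ P₁)) :
    IsGPrimeIdeal (MonoidHom.comp (⟨⟨fun e => e.toRingEquiv, rfl⟩,
        fun _ _ => rfl⟩ : (A₁ ≃ₐ[k] A₁) →* (A₁ ≃+* A₁)) φ₁) P₁ ∧
    IsGPrimeIdeal (MonoidHom.comp (⟨⟨fun e => e.toRingEquiv, rfl⟩,
        fun _ _ => rfl⟩ : (A₂ ≃ₐ[k] A₂) →* (A₂ ≃+* A₂)) φ₂) P₂ :=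
  contraction_of_tensor_G_prime_general φ₁ φ₂ φ hφ P hP P₁ P₂ hP₁ hP₂
end

section
/- Let R be a right noetherian ring and d an element of R such that R is generated as a ring by a set S of elements x with the property that for every x ∈ S and every r ≥ 1, d^r·x ∈ R·d^{r-1} and x·d^r ∈ d^{r-1}·R, and such that d is a non-zero-divisor. Then the multiplicative set D = {d^r : r ≥ 0} is a left and right Ore set in R. -/
/-- Let `R` be a right noetherian ring generated as a ring by a set `S` of
elements `x` satisfying `dʳ·x ∈ R·d^{r-1}` and `x·dʳ ∈ d^{r-1}·R` for all `r ≥ 1`, where `d`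
is a non-zero-divisor.  Then `D = {dʳ : r ≥ 0}` is a left and right Ore set in `R`. -/
theorem powers_of_d_are_Ore
    {R : Type*} [Ring R] [IsNoetherianRing Rᵐᵒᵖ] (d : R) (S : Set R)
    (hgen : Subring.closure S = ⊤)
    (hS : ∀ x ∈ S, ∀ r : ℕ, 1 ≤ r →
      (∃ b : R, d ^ r * x = b * d ^ (r - 1)) ∧ (∃ b : R, x * d ^ r = d ^ (r - 1) * b))
    (hreg : ∀ a : R, (d * a = 0 → a = 0) ∧ (a * d = 0 → a = 0)) :
    (∀ a : R, ∀ m : ℕ, ∃ (b : R) (s : ℕ), a * d ^ s = d ^ m * b) ∧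
    (∀ a : R, ∀ m : ℕ, ∃ (b : R) (s : ℕ), d ^ s * a = b * d ^ m) := by
  have key : ∀ a : R, ∃ k : ℕ, ∀ r : ℕ, k ≤ r →
      (∃ b : R, d ^ r * a = b * d ^ (r - k)) ∧ (∃ b : R, a * d ^ r = d ^ (r - k) * b) := by
    intro a
    have ha : a ∈ Subring.closure S := by rw [hgen]; trivial
    induction ha using Subring.closure_induction with
    | mem x hx => exact ⟨1, fun r hr => hS x hx r hr⟩
    | zero => exact ⟨0, fun r _ => ⟨⟨0, by simp⟩, ⟨0, by simp⟩⟩⟩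
    | one => exact ⟨0, fun r _ => ⟨⟨1, by simp⟩, ⟨1, by simp⟩⟩⟩
    | neg a _ ih =>
        obtain ⟨k, hk⟩ := ih
        refine ⟨k, fun r hr => ?_⟩
        obtain ⟨⟨b1, hb1⟩, ⟨b2, hb2⟩⟩ := hk r hr
        exact ⟨⟨-b1, by rw [mul_neg, hb1, neg_mul]⟩,
               ⟨-b2, by rw [neg_mul, hb2, mul_neg]⟩⟩
    | add a a' _ _ iha iha' =>
        obtain ⟨k, hk⟩ := iha
        obtain ⟨k', hk'⟩ := iha'
        refine ⟨max k k', fun r hr => ?_⟩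
        obtain ⟨⟨b1, hb1⟩, ⟨b2, hb2⟩⟩ := hk r (le_trans (le_max_left _ _) hr)
        obtain ⟨⟨b1', hb1'⟩, ⟨b2', hb2'⟩⟩ := hk' r (le_trans (le_max_right _ _) hr)
        have e1 : r - k = (max k k' - k) + (r - max k k') := by omega
        have e1' : r - k' = (max k k' - k') + (r - max k k') := by omega
        have e2 : r - k = (r - max k k') + (max k k' - k) := by omega
        have e2' : r - k' = (r - max k k') + (max k k' - k') := by omega
        constructor
        · refine ⟨b1 * d ^ (max k k' - k) + b1' * d ^ (max k k' - k'), ?_⟩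
          rw [mul_add, hb1, hb1', e1, e1', pow_add, pow_add]
          noncomm_ring
        · refine ⟨d ^ (max k k' - k) * b2 + d ^ (max k k' - k') * b2', ?_⟩
          rw [add_mul, hb2, hb2', e2, e2', pow_add, pow_add]
          noncomm_ring
    | mul a a' _ _ iha iha' =>
        obtain ⟨k, hk⟩ := iha
        obtain ⟨k', hk'⟩ := iha'
        refine ⟨k + k', fun r hr => ?_⟩
        constructor
        · obtain ⟨⟨b1, hb1⟩, _⟩ := hk r (by omega)
          obtain ⟨⟨b1', hb1'⟩, _⟩ := hk' (r - k) (by omega)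
          refine ⟨b1 * b1', ?_⟩
          have : r - k - k' = r - (k + k') := by omega
          rw [← mul_assoc, hb1, mul_assoc, hb1', ← mul_assoc, this]
        · obtain ⟨_, ⟨b2, hb2⟩⟩ := hk (r - k') (by omega)
          obtain ⟨_, ⟨b2', hb2'⟩⟩ := hk' r (by omega)
          refine ⟨b2 * b2', ?_⟩
          have : r - k' - k = r - (k + k') := by omega
          rw [mul_assoc, hb2', ← mul_assoc, hb2, mul_assoc, this]
  constructor
  · intro a m
    obtain ⟨k, hk⟩ := key a
    obtain ⟨_, ⟨b, hb⟩⟩ := hk (m + k) (by omega)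
    refine ⟨b, m + k, ?_⟩
    rwa [show m + k - k = m by omega] at hb
  · intro a m
    obtain ⟨k, hk⟩ := key a
    obtain ⟨⟨b, hb⟩, _⟩ := hk (m + k) (by omega)
    refine ⟨b, m + k, ?_⟩
    rwa [show m + k - k = m by omega] at hb
end
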